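/- Lipschitz gradient of the smoothed dual: in the setting of the previous statement (S compact convex, b concave continuous, d strongly convex with parameter σ, c > 0), the map λ ↦ s(λ), where s(λ) = argmax_{s ∈ S} [ b(s) − λᵀs − c·d(s) ], is Lipschitz continuous with constant 1/(cσ): ‖s(λ) − s(μ)‖ ≤ (1/(cσ))·‖λ − μ‖ for all λ, μ ∈ ℝᴺ. -/

import Mathlib

open RealInnerProductSpace

/-!
The objective `s ↦ b s - c * d s - ⟪λ, s⟫` is `cσ`-strongly concave, so it drops by at least
`cσ/2 · ‖s(λ) - s‖²` from its maximizer `s(λ)`. Adding this for `λ` at `s(μ)` and for `μ` at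
`s(λ)`, the `b` and `d` terms cancel and leave `cσ ‖s(λ) - s(μ)‖² ≤ ⟪μ - λ, s(λ) - s(μ)⟫`;
Cauchy–Schwarz finishes.
-/

open Filter Set Topology in
theorem le_of_forall_one_sub_mul_le {k a : ℝ} (h : ∀ t ∈ Ioo (0 : ℝ) 1, (1 - t) * k ≤ a) :
    k ≤ a := by
  have hlim : Tendsto (fun t : ℝ => (1 - t) * k) (𝓝[>] 0) (𝓝 k) := by
    have : Continuous fun t : ℝ => (1 - t) * k := by fun_prop
    simpa using (this.tendsto 0).mono_left nhdsWithin_le_nhds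
  exact le_of_tendsto hlim <| eventually_of_mem (Ioo_mem_nhdsGT one_pos) h

section NormedSpace

variable {E : Type*} [NormedAddCommGroup E] [NormedSpace ℝ E] {s : Set E} {m : ℝ} {f : E → ℝ}

theorem StrongConvexOn.const_mul {c : ℝ} (hf : StrongConvexOn s m f) (hc : 0 ≤ c) :
    StrongConvexOn s (c * m) (fun x => c * f x) := by
  refine ⟨hf.1, fun x hx y hy a b ha hb hab => ?_⟩
  have := mul_le_mul_of_nonneg_left (hf.2 hx hy ha hb hab) hc
  simp only [smul_eq_mul] at this ⊢
  linarith

theorem StrongConcaveOn.sq_norm_sub_le_of_isMaxOn {x y : E} (hf : StrongConcaveOn s m f)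
    (hx : x ∈ s) (hy : y ∈ s) (hmax : IsMaxOn f s x) :
    m / 2 * ‖x - y‖ ^ 2 ≤ f x - f y := by
  -- compare `f x` with `f ((1 - t) • x + t • y)`, divide by `t`, and let `t → 0`
  refine le_of_forall_one_sub_mul_le fun t ⟨ht0, ht1⟩ => ?_
  have hconc := hf.2 hx hy (sub_nonneg.2 ht1.le) ht0.le (sub_add_cancel 1 t)
  have hle : f ((1 - t) • x + t • y) ≤ f x :=
    hmax (hf.1 hx hy (sub_nonneg.2 ht1.le) ht0.le (sub_add_cancel 1 t))
  simp only [smul_eq_mul] at hconc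
  have : t * ((1 - t) * (m / 2 * ‖x - y‖ ^ 2)) ≤ t * (f x - f y) := by nlinarith
  exact le_of_mul_le_mul_left this ht0

end NormedSpace

section InnerProductSpace

variable {E : Type*} [NormedAddCommGroup E] [InnerProductSpace ℝ E] {s : Set E} {m : ℝ}
  {g : E → ℝ}

theorem StrongConcaveOn.sub_inner (hg : StrongConcaveOn s m g) (v : E) :
    StrongConcaveOn s m (fun x => g x - ⟪v, x⟫) := by
  have hlin : UniformConvexOn s 0 (fun x => ⟪v, x⟫) :=
    uniformConvexOn_zero.2 <| ((innerSL ℝ v : E →L[ℝ] ℝ) : E →ₗ[ℝ] ℝ).convexOn hg.1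
  have h := hg.sub hlin
  rwa [add_zero] at h

theorem StrongConcaveOn.mul_sq_norm_sub_le_inner_of_isMaxOn_sub_inner {x y u v : E}
    (hg : StrongConcaveOn s m g) (hx : x ∈ s) (hy : y ∈ s)
    (hxmax : IsMaxOn (fun z => g z - ⟪u, z⟫) s x) (hymax : IsMaxOn (fun z => g z - ⟪v, z⟫) s y) :
    m * ‖x - y‖ ^ 2 ≤ ⟪v - u, x - y⟫ := by
  have hxy := (hg.sub_inner u).sq_norm_sub_le_of_isMaxOn hx hy hxmax
  have hyx := (hg.sub_inner v).sq_norm_sub_le_of_isMaxOn hy hx hymax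
  rw [norm_sub_rev] at hyx
  simp only [inner_sub_left, inner_sub_right] at hxy hyx ⊢
  linarith

theorem StrongConcaveOn.norm_sub_le_of_isMaxOn_sub_inner {x y u v : E}
    (hg : StrongConcaveOn s m g) (hm : 0 < m) (hx : x ∈ s) (hy : y ∈ s)
    (hxmax : IsMaxOn (fun z => g z - ⟪u, z⟫) s x) (hymax : IsMaxOn (fun z => g z - ⟪v, z⟫) s y) :
    ‖x - y‖ ≤ ‖u - v‖ / m := by
  have hmono := hg.mul_sq_norm_sub_le_inner_of_isMaxOn_sub_inner hx hy hxmax hymax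
  have hcs : ⟪v - u, x - y⟫ ≤ ‖u - v‖ * ‖x - y‖ :=
    norm_sub_rev v u ▸ real_inner_le_norm _ _
  rw [le_div_iff₀ hm]
  rcases (norm_nonneg (x - y)).eq_or_lt with h0 | hpos
  · rw [← h0, zero_mul]
    exact norm_nonneg _
  · nlinarith

end InnerProductSpace

theorem argmax_lipschitz_general (N : ℕ) (S : Set (EuclideanSpace ℝ (Fin N)))
    (b d : EuclideanSpace ℝ (Fin N) → ℝ)
    (hb : ConcaveOn ℝ S b)
    (σ : ℝ) (hσ : 0 < σ) (hd : StrongConvexOn S σ d)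
    (c : ℝ) (hc : 0 < c)
    (smax : EuclideanSpace ℝ (Fin N) → EuclideanSpace ℝ (Fin N))
    (hsmem : ∀ lam, smax lam ∈ S)
    (hsmax : ∀ lam, IsMaxOn (fun s => b s - ⟪lam, s⟫ - c * d s) S (smax lam)) :
    ∀ lam mu, ‖smax lam - smax mu‖ ≤ (1 / (c * σ)) * ‖lam - mu‖ := by
  intro lam mu
  have hconc : StrongConcaveOn S (c * σ) (fun s => b s - c * d s) := by
    have h := hb.uniformConcaveOn_zero.sub (hd.const_mul hc.le)
    rwa [zero_add] at h
  have hsmax' : ∀ lam, IsMaxOn (fun s => b s - c * d s - ⟪lam, s⟫) S (smax lam) :=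
    fun lam z hz => by
      have h := hsmax lam hz
      simp only [Set.mem_ofPred_eq] at h ⊢
      linarith
  rw [one_div_mul_eq_div]
  exact hconc.norm_sub_le_of_isMaxOn_sub_inner (mul_pos hc hσ) (hsmem lam) (hsmem mu)
    (hsmax' lam) (hsmax' mu)

theorem argmax_lipschitz (N : ℕ) (S : Set (EuclideanSpace ℝ (Fin N)))
    (hSne : S.Nonempty) (hScpt : IsCompact S) (hScvx : Convex ℝ S)
    (b d : EuclideanSpace ℝ (Fin N) → ℝ)
    (hb : ConcaveOn ℝ S b) (hbc : ContinuousOn b S)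
    (σ : ℝ) (hσ : 0 < σ) (hd : StrongConvexOn S σ d) (hdc : ContinuousOn d S)
    (c : ℝ) (hc : 0 < c)
    (smax : EuclideanSpace ℝ (Fin N) → EuclideanSpace ℝ (Fin N))
    (hsmem : ∀ lam, smax lam ∈ S)
    (hsmax : ∀ lam, IsMaxOn (fun s => b s - ⟪lam, s⟫ - c * d s) S (smax lam)) :
    ∀ lam mu, ‖smax lam - smax mu‖ ≤ (1 / (c * σ)) * ‖lam - mu‖ :=
  argmax_lipschitz_general N S b d hb σ hσ hd c hc smax hsmem hsmax
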